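/- Let σ = ⟨∅,S,true,T⟩_n be a pre-normalized reachable state of the translated program T(P). If there is an ω_p transition σ → σ' firing an implied rule instance, then the pre-normalization of σ' has the form ⟨∅,S,true,T'⟩_{n'} with T' ⊋ T; in particular chrToLa(σ) = chrToLa(σ') and the CHR constraint store after pre-normalization is unchanged while the propagation history strictly grows. -/

import Mathlib

namespace LA2CHR

/-- Mode indicators: positively asserted (`p`), negatively asserted (`n`), or both (`b`). -/
inductive Mode : Type
  | p | n | b
deriving DecidableEq

/-- CHR constraints of the translated program `T(P)`: for each ground user-defined
LA atom `a`, `raw a` is the CHR constraint `a(X̄)`, `rawDel a` is `del(a(X̄))`, and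
`rep a m` is the representation constraint `a_r(X̄, m)` with mode indicator `m`. -/
inductive TC (α : Type) : Type
  | raw : α → TC α
  | rawDel : α → TC α
  | rep : α → Mode → TC α
deriving DecidableEq

/-- Ground Logical Algorithms assertions: positive (`pos a` is `a`) or
negative (`del a` is `del(a)`). -/
inductive LAAtom (α : Type) : Type
  | pos : α → LAAtom α
  | del : α → LAAtom α
deriving DecidableEq

/-- A ground instance of a Logical Algorithms rule, with the comparison antecedents
already evaluated away: a ground instance belongs to the program iff its comparisons
are true.  `posA` are the (distinct) positive user-defined ground antecedents, `negA`
the atoms of the negative (`del`) antecedents, `concl` the instantiated conclusion and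
`prio` the instantiated rule priority. -/
structure Inst (α : Type) where
  prio : ℕ
  posA : Finset α
  negA : Finset α
  concl : Finset (LAAtom α)

variable {α : Type}

/-- Applicability of a ground rule instance of `P` in an LA state
(the priority condition is not included). -/
def LAApplicable (P : Set (Inst α)) (σ : Set (LAAtom α)) (ι : Inst α) : Prop :=
  ι ∈ P ∧ (∀ a ∈ ι.posA, LAAtom.pos a ∈ σ ∧ LAAtom.del a ∉ σ) ∧
    (∀ a ∈ ι.negA, LAAtom.del a ∈ σ) ∧ ¬ ↑ι.concl ⊆ σ

/-- The `Apply` transition of Logical Algorithms: a highest-priority applicable ground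
rule instance whose conclusion is not yet contained in the state fires. -/
def LAStep (P : Set (Inst α)) (σ σ' : Set (LAAtom α)) : Prop :=
  ∃ ι, LAApplicable P σ ι ∧ σ' = σ ∪ ↑ι.concl ∧
    ∀ ι', LAApplicable P σ ι' → ι.prio ≤ ι'.prio

/-- Names of the rules of the translated CHR^rp program `T(P)`: the six
set/deletion-semantics rule schemas (for all user-defined predicates at once,
instantiated per ground atom), and one propagation rule per ground LA rule instance
(the ground collapse of the rules `r_ρ`). -/
inductive RuleTag (α : Type) : Type
  | keepPos | mergePos | newPos | keepNeg | mergeNeg | newNeg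
  | inst : Inst α → RuleTag α

/-- Rule priorities of `T(P)`: the update rules have priority 1, the rules creating a
fresh representation have priority 2, and the translation of an LA rule of priority
`p` has priority `p + 2`. -/
def RuleTag.prio : RuleTag α → ℕ
  | .keepPos => 1
  | .mergePos => 1
  | .keepNeg => 1
  | .mergeNeg => 1
  | .newPos => 2
  | .newNeg => 2
  | .inst ι => ι.prio + 2

/-- CHR^rp execution states `⟨G, S, true, T⟩_n`: goal, CHR constraint store of
identified constraints, propagation history (recording a rule together with the set of
identified constraints it fired on) and next free identifier.  As the translated
program has no built-in tell constraints, the built-in store is always `true` and is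
omitted. -/
structure CState (α : Type) where
  goal : Multiset (TC α)
  store : Set (TC α × ℕ)
  hist : Set (RuleTag α × Set (TC α × ℕ))
  next : ℕ

/-- Conclusion atoms as CHR constraints. -/
def toTC : LAAtom α → TC α
  | .pos a => .raw a
  | .del a => .rawDel a

/-- `Fires P χ t H R B`: rule `t` of `T(P)` has an instance in state `χ` matching the
set `H` of identified stored head constraints, of which the ones in `R` are removed,
with instantiated body `B`.  This comprises all conditions of the ω_p `Apply`
transition except the empty-goal, propagation-history and priority conditions. -/
inductive Fires (P : Set (Inst α)) (χ : CState α) :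
    RuleTag α → Set (TC α × ℕ) → Set (TC α × ℕ) → Multiset (TC α) → Prop
  | keepPos (a : α) (m : Mode) (i j : ℕ) : m ≠ Mode.n →
      (TC.rep a m, i) ∈ χ.store → (TC.raw a, j) ∈ χ.store →
      Fires P χ .keepPos {(TC.rep a m, i), (TC.raw a, j)} {(TC.raw a, j)} 0
  | mergePos (a : α) (i j : ℕ) :
      (TC.rep a Mode.n, i) ∈ χ.store → (TC.raw a, j) ∈ χ.store →
      Fires P χ .mergePos {(TC.rep a Mode.n, i), (TC.raw a, j)}
        {(TC.rep a Mode.n, i), (TC.raw a, j)} {TC.rep a Mode.b}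
  | newPos (a : α) (j : ℕ) : (TC.raw a, j) ∈ χ.store →
      Fires P χ .newPos {(TC.raw a, j)} {(TC.raw a, j)} {TC.rep a Mode.p}
  | keepNeg (a : α) (m : Mode) (i j : ℕ) : m ≠ Mode.p →
      (TC.rep a m, i) ∈ χ.store → (TC.rawDel a, j) ∈ χ.store →
      Fires P χ .keepNeg {(TC.rep a m, i), (TC.rawDel a, j)} {(TC.rawDel a, j)} 0
  | mergeNeg (a : α) (i j : ℕ) :
      (TC.rep a Mode.p, i) ∈ χ.store → (TC.rawDel a, j) ∈ χ.store →
      Fires P χ .mergeNeg {(TC.rep a Mode.p, i), (TC.rawDel a, j)}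
        {(TC.rep a Mode.p, i), (TC.rawDel a, j)} {TC.rep a Mode.b}
  | newNeg (a : α) (j : ℕ) : (TC.rawDel a, j) ∈ χ.store →
      Fires P χ .newNeg {(TC.rawDel a, j)} {(TC.rawDel a, j)} {TC.rep a Mode.n}
  | inst (ι : Inst α) (fp fn : α → ℕ) (fm : α → Mode) : ι ∈ P →
      (∀ a ∈ ι.posA, (TC.rep a Mode.p, fp a) ∈ χ.store) →
      (∀ a ∈ ι.negA, fm a ≠ Mode.p ∧ (TC.rep a (fm a), fn a) ∈ χ.store) →
      Fires P χ (.inst ι)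
        ((fun a => (TC.rep a Mode.p, fp a)) '' ↑ι.posA ∪
          (fun a => (TC.rep a (fm a), fn a)) '' ↑ι.negA)
        ∅ (Multiset.map toTC ι.concl.val)

/-- Transition labels: `Introduce`, or `Apply` of a given rule of `T(P)`. -/
inductive Lab (α : Type) : Type
  | intro : Lab α
  | apply : RuleTag α → Lab α

variable [DecidableEq α]

/-- The transitions of the priority semantics ω_p for the translated program `T(P)`:
`Introduce` moves a constraint from the goal to the store with a fresh identifier;
`Apply` (possible only when the goal is empty) fires an instance of a rule whose
history tuple is not yet recorded and such that no fireable rule instance has a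
strictly higher priority. -/
inductive Step (P : Set (Inst α)) : CState α → Lab α → CState α → Prop
  | intro (χ : CState α) (c : TC α) : c ∈ χ.goal →
      Step P χ .intro ⟨χ.goal.erase c, insert (c, χ.next) χ.store, χ.hist, χ.next + 1⟩
  | apply (χ : CState α) (t : RuleTag α) (H R : Set (TC α × ℕ)) (B : Multiset (TC α)) :
      χ.goal = 0 → Fires P χ t H R B → (t, H) ∉ χ.hist →
      (∀ t' H' R' B', Fires P χ t' H' R' B' → (t', H') ∉ χ.hist →
        RuleTag.prio t ≤ RuleTag.prio t') →
      Step P χ (.apply t) ⟨B, χ.store \ R, insert (t, H) χ.hist, χ.next⟩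

/-- Some ω_p transition. -/
def StepAny (P : Set (Inst α)) (χ χ' : CState α) : Prop := ∃ l, Step P χ l χ'

/-- An ω_p transition that is an `Introduce` or fires a rule of priority 1 or 2. -/
def Step2 (P : Set (Inst α)) (χ χ' : CState α) : Prop :=
  ∃ l, Step P χ l χ' ∧ ∀ t, l = Lab.apply t → RuleTag.prio t ≤ 2

/-- Membership in `A = G ∪ chr(S)`. -/
def memA (χ : CState α) (c : TC α) : Prop := c ∈ χ.goal ∨ ∃ i, (c, i) ∈ χ.store

/-- The mapping from (reachable) CHR^rp execution states of `T(P)` to LA states. -/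
def chrToLa (χ : CState α) : Set (LAAtom α) :=
  {x | (∃ a, x = LAAtom.pos a ∧
          (memA χ (TC.raw a) ∨ ∃ m, m ≠ Mode.n ∧ memA χ (TC.rep a m))) ∨
       (∃ a, x = LAAtom.del a ∧
          (memA χ (TC.rawDel a) ∨ ∃ m, m ≠ Mode.p ∧ memA χ (TC.rep a m)))}

/-- Initial states `⟨G, ∅, true, ∅⟩_n` where the goal `G` contains only constraints of
the forms `a(X̄)` and `del(a(X̄))` (no `a_r` constraints). -/
def Init (χ : CState α) : Prop :=
  (∀ c ∈ χ.goal, ∃ a, c = TC.raw a ∨ c = TC.rawDel a) ∧ χ.store = ∅ ∧ χ.hist = ∅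

/-- Reachability (w.r.t. ω_p and program `T(P)`) from an initial state. -/
def Reachable (P : Set (Inst α)) (χ : CState α) : Prop :=
  ∃ χ₀, Init χ₀ ∧ Relation.ReflTransGen (StepAny P) χ₀ χ

/-- Pre-normal form: empty goal, the store contains only `a_r(X̄, M)` constraints, and
two stored representations of the same atom have the same identifier. -/
def PreNormal (χ : CState α) : Prop :=
  χ.goal = 0 ∧ (∀ c ∈ χ.store, ∃ a m, c.1 = TC.rep a m) ∧
  ∀ a m₁ m₂ i₁ i₂, (TC.rep a m₁, i₁) ∈ χ.store → (TC.rep a m₂, i₂) ∈ χ.store → i₁ = i₂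

/-- A rule instance is implied in a state `σ` if its conclusion is contained in
`chrToLa σ`. -/
def Implied (ι : Inst α) (χ : CState α) : Prop := ↑ι.concl ⊆ chrToLa χ

end LA2CHR

/-!
Because `σ` is pre-normal and the instance is implied, every conclusion `a` (resp. `del(a)`) is
already witnessed in the store by a representation `a_r(X̄, M)` with `M ≠ n` (resp. `M ≠ p`).
Firing the propagation rule removes nothing and only puts these raw constraints into the goal,
so `chrToLa` does not change. Pre-normalization introduces them with fresh identifiers and then
removes each one by the priority-1 rule that keeps the existing representation. No such firing
is blocked by the propagation history: every identifier recorded there is below the `next`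
counter of `σ'` (an invariant of reachable states), while the introduced ones are not. Hence
the store returns to `S`, and the history keeps the new tuple of the fired instance.
-/

namespace LA2CHR

variable {α : Type}

/-- `c` is a raw constraint that a priority-1 rule `keepPos` / `keepNeg` removes against a
representation in `S` without changing `S`. -/
def Subsumed (S : Set (TC α × ℕ)) (c : TC α) : Prop :=
  (∃ a, c = TC.raw a ∧ ∃ m i, m ≠ Mode.n ∧ (TC.rep a m, i) ∈ S) ∨
  (∃ a, c = TC.rawDel a ∧ ∃ m i, m ≠ Mode.p ∧ (TC.rep a m, i) ∈ S)

lemma chrToLa_eq_of_subsumed {G : Multiset (TC α)} {S : Set (TC α × ℕ)}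
    (hG : ∀ c ∈ G, Subsumed S c) (T T' : Set (RuleTag α × Set (TC α × ℕ))) (N N' : ℕ) :
    chrToLa ⟨G, S, T, N⟩ = chrToLa ⟨0, S, T', N'⟩ := by
  have hrep : ∀ a m, TC.rep a m ∉ G := fun a m h => by
    rcases hG _ h with ⟨_, h, -⟩ | ⟨_, h, -⟩ <;> cases h
  have hraw : ∀ a, TC.raw a ∈ G → ∃ m i, m ≠ Mode.n ∧ (TC.rep a m, i) ∈ S := fun a h => by
    rcases hG _ h with ⟨_, h, hS⟩ | ⟨_, h, -⟩ <;> cases h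
    exact hS
  have hdel : ∀ a, TC.rawDel a ∈ G → ∃ m i, m ≠ Mode.p ∧ (TC.rep a m, i) ∈ S := fun a h => by
    rcases hG _ h with ⟨_, h, -⟩ | ⟨_, h, hS⟩ <;> cases h
    exact hS
  ext x
  simp only [chrToLa, memA, Set.mem_ofPred_eq, Multiset.notMem_zero, false_or]
  grind

lemma Implied.subsumed {ι : Inst α} {χ : CState α} (h : Implied ι χ) (hgoal : χ.goal = 0)
    (hrep : ∀ x ∈ χ.store, ∃ a m, x.1 = TC.rep a m) :
    ∀ c ∈ Multiset.map toTC ι.concl.val, Subsumed χ.store c := by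
  have hraw : ∀ c i, (c, i) ∈ χ.store → ∀ a, c ≠ TC.raw a ∧ c ≠ TC.rawDel a := fun c i hc a => by
    obtain ⟨b, m, hb⟩ := hrep _ hc
    simp_all
  intro c hc
  obtain ⟨y, hy, rfl⟩ := Multiset.mem_map.mp hc
  have hyχ := h (Finset.mem_coe.mpr hy)
  simp only [chrToLa, memA, hgoal, Multiset.notMem_zero, false_or, Set.mem_ofPred_eq] at hyχ
  cases y <;> simp only [Subsumed, toTC] <;> grind

lemma RuleTag.one_le_prio (t : RuleTag α) : 1 ≤ t.prio := by
  cases t <;> simp [RuleTag.prio]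

lemma Fires.subset_store {P : Set (Inst α)} {χ : CState α} {t : RuleTag α}
    {H R : Set (TC α × ℕ)} {B : Multiset (TC α)} (h : Fires P χ t H R B) : H ⊆ χ.store := by
  cases h with
  | inst ι fp fn fm _ hpos hneg =>
    rintro _ (⟨a, ha, rfl⟩ | ⟨a, ha, rfl⟩)
    exacts [hpos a ha, (hneg a ha).2]
  | _ => simp_all [Set.insert_subset_iff]

def IdsBelowNext (χ : CState α) : Prop :=
  (∀ x ∈ χ.store, x.2 < χ.next) ∧ ∀ e ∈ χ.hist, ∀ x ∈ e.2, x.2 < χ.next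

section Transitions

variable [DecidableEq α] {P : Set (Inst α)}

lemma IdsBelowNext.step {χ χ' : CState α} {l : Lab α} (h : IdsBelowNext χ)
    (hs : Step P χ l χ') : IdsBelowNext χ' := by
  cases hs with
  | intro _ _ =>
    refine ⟨?_, fun e he x hx => Nat.lt_succ_of_lt (h.2 e he x hx)⟩
    rintro x (rfl | hx)
    exacts [Nat.lt_succ_self _, Nat.lt_succ_of_lt (h.1 x hx)]
  | apply _ _ _ _ _ hf _ _ =>
    refine ⟨fun x hx => h.1 x hx.1, ?_⟩
    rintro e (rfl | he) x hx
    exacts [h.1 x (hf.subset_store hx), h.2 e he x hx]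

lemma Reachable.step {χ χ' : CState α} {l : Lab α} (h : Reachable P χ) (hs : Step P χ l χ') :
    Reachable P χ' :=
  let ⟨χ₀, h₀, hrt⟩ := h
  ⟨χ₀, h₀, hrt.tail ⟨l, hs⟩⟩

lemma Reachable.idsBelowNext {χ : CState α} (h : Reachable P χ) : IdsBelowNext χ := by
  obtain ⟨χ₀, ⟨-, hs, hh⟩, hrt⟩ := h
  induction hrt with
  | refl => exact ⟨by simp [hs], by simp [hh]⟩
  | tail _ hstep ih => exact ih.step hstep.choose_spec

lemma Step.eq_of_inst {χ χ' : CState α} {ι : Inst α} (h : Step P χ (.apply (.inst ι)) χ') :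
    ∃ H, (RuleTag.inst ι, H) ∉ χ.hist ∧
      χ' = ⟨Multiset.map toTC ι.concl.val, χ.store, insert (.inst ι, H) χ.hist, χ.next⟩ := by
  cases h with
  | apply _ _ _ _ _ hf hnew _ =>
    cases hf
    exact ⟨_, hnew, by simp⟩

lemma introduce_goal (χ : CState α) :
    ∃ I : Finset (TC α × ℕ), (∀ x ∈ I, x.1 ∈ χ.goal ∧ χ.next ≤ x.2) ∧
      Relation.ReflTransGen (Step2 P) χ
        ⟨0, χ.store ∪ ↑I, χ.hist, χ.next + Multiset.card χ.goal⟩ := by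
  obtain ⟨G, S, T, N⟩ := χ
  induction G using Multiset.induction_on generalizing S N with
  | empty => exact ⟨∅, by simp, by simpa using .refl⟩
  | cons c G ih =>
    obtain ⟨I, hI, hrt⟩ := ih (insert (c, N) S) (N + 1)
    have hstep : Step2 P ⟨c ::ₘ G, S, T, N⟩ ⟨G, insert (c, N) S, T, N + 1⟩ := by
      refine ⟨.intro, ?_, fun t h => nomatch h⟩
      simpa using Step.intro (P := P) ⟨c ::ₘ G, S, T, N⟩ c (Multiset.mem_cons_self c G)
    refine ⟨insert (c, N) I, ?_, .head hstep ?_⟩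
    · simp only [Finset.mem_insert, Multiset.mem_cons]
      rintro x (rfl | hx)
      · simp
      · exact ⟨.inr (hI x hx).1, by grind⟩
    · convert hrt using 2
      · simp [Set.insert_union]
      · simp; omega

lemma step2_remove_subsumed {S St : Set (TC α × ℕ)} {T : Set (RuleTag α × Set (TC α × ℕ))}
    {N : ℕ} {x : TC α × ℕ} (hx : Subsumed S x.1) (hS : S ⊆ St) (hxSt : x ∈ St)
    (hT : ∀ e ∈ T, x ∉ e.2) :
    ∃ e : RuleTag α × Set (TC α × ℕ), e.2 ⊆ insert x S ∧
      Step2 P ⟨0, St, T, N⟩ ⟨0, St \ {x}, insert e T, N⟩ := by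
  have hmin : ∀ t' H' R' B', Fires P ⟨0, St, T, N⟩ t' H' R' B' → (t', H') ∉ T →
      1 ≤ RuleTag.prio t' := fun t' _ _ _ _ _ => t'.one_le_prio
  obtain ⟨c, j⟩ := x
  rcases hx with ⟨a, rfl, m, i, hm, hi⟩ | ⟨a, rfl, m, i, hm, hi⟩
  · refine ⟨(.keepPos, {(TC.rep a m, i), (TC.raw a, j)}), by simp [Set.insert_subset_iff, hi],
      .apply .keepPos, Step.apply _ _ _ _ _ rfl (.keepPos a m i j hm (hS hi) hxSt)
        (fun h => hT _ h (by simp)) hmin, ?_⟩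
    rintro _ ⟨⟩
    simp [RuleTag.prio]
  · refine ⟨(.keepNeg, {(TC.rep a m, i), (TC.rawDel a, j)}), by simp [Set.insert_subset_iff, hi],
      .apply .keepNeg, Step.apply _ _ _ _ _ rfl (.keepNeg a m i j hm (hS hi) hxSt)
        (fun h => hT _ h (by simp)) hmin, ?_⟩
    rintro _ ⟨⟩
    simp [RuleTag.prio]

lemma remove_subsumed {S : Set (TC α × ℕ)} (N : ℕ) (I : Finset (TC α × ℕ))
    (hI : ∀ x ∈ I, Subsumed S x.1) (hSI : Disjoint S ↑I)
    (T : Set (RuleTag α × Set (TC α × ℕ))) (hT : ∀ e ∈ T, Disjoint e.2 ↑I) :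
    ∃ T', T ⊆ T' ∧ Relation.ReflTransGen (Step2 P) ⟨0, S ∪ ↑I, T, N⟩ ⟨0, S, T', N⟩ := by
  induction I using Finset.induction_on generalizing T with
  | empty => exact ⟨T, subset_rfl, by simpa using .refl⟩
  | insert x I hxI ih =>
    have hxS : x ∉ S := Set.disjoint_right.mp hSI (by simp)
    obtain ⟨e, he, hstep⟩ := step2_remove_subsumed (P := P) (N := N) (hI x (by simp))
      Set.subset_union_left
      (Set.mem_union_right _ (Finset.mem_coe.mpr (Finset.mem_insert_self x I)))
      fun e h => Set.disjoint_right.mp (hT e h) (by simp)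
    have hstore : (S ∪ ↑(insert x I)) \ {x} = S ∪ ↑I := by
      ext y
      by_cases hy : y = x <;> simp [hy, hxS, hxI]
    have hT' : ∀ e' ∈ insert e T, Disjoint e'.2 ↑I := by
      rintro e' (rfl | he')
      · refine Set.disjoint_of_subset_left he (Set.disjoint_insert_left.mpr ⟨by simpa, ?_⟩)
        exact hSI.mono_right (by simp)
      · exact (hT e' he').mono_right (by simp)
    obtain ⟨T', hTT', hrt⟩ := ih (fun y hy => hI y (by simp [hy]))
      (hSI.mono_right (by simp)) (insert e T) hT'
    exact ⟨T', (Set.subset_insert _ _).trans hTT', .head (hstore ▸ hstep) hrt⟩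

end Transitions

end LA2CHR

open LA2CHR in
/-- Let `σ = ⟨∅, S, true, T⟩_n` be a pre-normalized reachable state of the translated
program `T(P)`.  If an ω_p transition `σ → σ'` fires an implied rule instance, then
`chrToLa σ = chrToLa σ'` and the pre-normalization of `σ'` has the form
`⟨∅, S, true, T'⟩_{n'}` with `T' ⊋ T`: the CHR constraint store after
pre-normalization is unchanged while the propagation history strictly grows. -/
theorem implied_rule_instances_are_no_ops {α : Type} [DecidableEq α]
    (P : Set (Inst α)) (χ χ' : CState α) (ι : Inst α)
    (hreach : Reachable P χ) (hpre : PreNormal χ)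
    (hstep : Step P χ (Lab.apply (RuleTag.inst ι)) χ')
    (himp : Implied ι χ) :
    chrToLa χ' = chrToLa χ ∧
    ∃ χs, Relation.ReflTransGen (Step2 P) χ' χs ∧ PreNormal χs ∧
      χs.store = χ.store ∧ χ.hist ⊂ χs.hist ∧ chrToLa χs = chrToLa χ := by
  have hids := (hreach.step hstep).idsBelowNext
  obtain ⟨H, hnew, rfl⟩ := hstep.eq_of_inst
  obtain ⟨G, S, T, N⟩ := χ
  obtain ⟨hgoal, hrep, hid⟩ := hpre
  subst hgoal
  have hsub := himp.subsumed rfl hrep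
  obtain ⟨I, hI, hintro⟩ := introduce_goal (P := P) ⟨_, S, insert (.inst ι, H) T, N⟩
  have hfresh : ∀ y : TC α × ℕ, y.2 < N → y ∉ (I : Set (TC α × ℕ)) :=
    fun y hy hyI => (hI y hyI).2.not_gt hy
  obtain ⟨T', hT', hremove⟩ := remove_subsumed (P := P) _ I (fun x hx => hsub _ (hI x hx).1)
    (Set.disjoint_left.mpr fun y hy => hfresh y (hids.1 y hy)) _
    fun e he => Set.disjoint_left.mpr fun y hy => hfresh y (hids.2 e he y hy)
  exact ⟨chrToLa_eq_of_subsumed hsub _ _ _ _, ⟨0, S, T', _⟩, hintro.trans hremove,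
    ⟨rfl, hrep, hid⟩, rfl, (Set.ssubset_insert hnew).trans_subset hT',
    chrToLa_eq_of_subsumed (by simp) _ _ _ _⟩
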